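/- Every irregular point of Y is a critical point of P: if y ∈ Y is in the closure of P⁻¹(Y) \ Y intersected with Y, then P'(y) = 0. -/

import Mathlib

open Set Filter Topology

/-! Near a point where `P' ≠ 0` the polynomial is injective. If `y' ∉ Y` is close to `y` with
`P y' ∈ Y`, local ontoness of `P|_Y` gives `y'' ∈ Y` close to `y` with `P y'' = P y'`, and
injectivity forces `y'' = y'`, contradicting `y' ∉ Y`. -/

def IsLocallyOntoAt {X Z : Type*} [TopologicalSpace X] [TopologicalSpace Z]
    (f : X → Z) (A : Set X) (B : Set Z) (x : X) : Prop :=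
  ∀ U ∈ 𝓝 x, ∃ V ∈ 𝓝 (f x), B ∩ V ⊆ f '' (A ∩ U)

theorem isLocallyOntoAt_of_dist {X Z : Type*} [PseudoMetricSpace X] [PseudoMetricSpace Z]
    {f : X → Z} {A : Set X} {B : Set Z} {x : X}
    (h : ∀ ε > 0, ∃ δ > 0, ∀ z ∈ B, dist z (f x) < δ → ∃ x' ∈ A, dist x' x < ε ∧ f x' = z) :
    IsLocallyOntoAt f A B x := by
  intro U hU
  obtain ⟨ε, hε, hεU⟩ := Metric.mem_nhds_iff.1 hU
  obtain ⟨δ, hδ, honto⟩ := h ε hε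
  refine ⟨Metric.ball (f x) δ, Metric.ball_mem_nhds _ hδ, fun z ⟨hzB, hzδ⟩ => ?_⟩
  obtain ⟨x', hx'A, hx'ε, rfl⟩ := honto z hzB hzδ
  exact ⟨x', ⟨hx'A, hεU hx'ε⟩, rfl⟩

theorem IsLocallyOntoAt.notMem_closure_preimage_diff {X Z : Type*} [TopologicalSpace X]
    [TopologicalSpace Z] {f : X → Z} {A : Set X} {B : Set Z} {x : X}
    (honto : IsLocallyOntoAt f A B x) (hcont : ContinuousAt f x) (hinj : ∃ U ∈ 𝓝 x, InjOn f U) :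
    x ∉ closure (f ⁻¹' B \ A) := by
  obtain ⟨U, hU, hfU⟩ := hinj
  obtain ⟨V, hV, hBV⟩ := honto U hU
  intro hx
  obtain ⟨x', ⟨hx'U, hx'V⟩, hx'B, hx'A⟩ :=
    mem_closure_iff_nhds.1 hx _ (inter_mem hU (hcont.preimage_mem_nhds hV))
  obtain ⟨x'', ⟨hx''A, hx''U⟩, hfx''⟩ := hBV ⟨hx'B, hx'V⟩
  exact hx'A (hfU hx''U hx'U hfx'' ▸ hx''A)

theorem HasStrictDerivAt.exists_mem_nhds_injOn {𝕜 : Type*} [NontriviallyNormedField 𝕜]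
    [CompleteSpace 𝕜] {f : 𝕜 → 𝕜} {f' a : 𝕜} (hf : HasStrictDerivAt f f' a) (hf' : f' ≠ 0) :
    ∃ U ∈ 𝓝 a, InjOn f U := by
  have hF := hf.hasStrictFDerivAt_equiv hf'
  refine ⟨_, (hF.toOpenPartialHomeomorph f).open_source.mem_nhds
    hF.mem_toOpenPartialHomeomorph_source, ?_⟩
  simpa only [hF.toOpenPartialHomeomorph_coe] using (hF.toOpenPartialHomeomorph f).injOn

theorem irregular_point_is_critical_general
    (p : Polynomial ℂ)
    (P : ℂ → ℂ) (hP : P = fun z => p.eval z)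
    (Y : Set ℂ)
    (hloconto : ∀ y ∈ Y, ∀ ε > 0, ∃ δ > 0, ∀ z ∈ Y, dist z (P y) < δ →
      ∃ y' ∈ Y, dist y' y < ε ∧ P y' = z)
    (y : ℂ) (hy : y ∈ closure (P ⁻¹' Y \ Y) ∩ Y) :
    p.derivative.eval y = 0 := by
  by_contra hne
  have hderiv : HasStrictDerivAt P (p.derivative.eval y) y := hP ▸ p.hasStrictDerivAt y
  exact (isLocallyOntoAt_of_dist (hloconto y hy.2)).notMem_closure_preimage_diff
    hderiv.hasDerivAt.continuousAt (hderiv.exists_mem_nhds_injOn hne) hy.1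

/-- every irregular point of `Y` is a critical point of `P`.
Here `P` is a polynomial, `Y` a full `P`-invariant continuum on which `P` is
locally onto, and `y ∈ Y` is irregular if `y ∈ cl(P⁻¹(Y) \ Y) ∩ Y`. -/
theorem irregular_point_is_critical
    (p : Polynomial ℂ) (hdeg : 0 < p.natDegree)
    (P : ℂ → ℂ) (hP : P = fun z => p.eval z)
    (Y : Set ℂ) (hYcpt : IsCompact Y) (hYconn : IsConnected Y)
    (hYfull : IsConnected Yᶜ)
    (hYinv : P '' Y = Y)
    (hloconto : ∀ y ∈ Y, ∀ ε > 0, ∃ δ > 0, ∀ z ∈ Y, dist z (P y) < δ →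
      ∃ y' ∈ Y, dist y' y < ε ∧ P y' = z)
    (y : ℂ) (hy : y ∈ closure (P ⁻¹' Y \ Y) ∩ Y) :
    p.derivative.eval y = 0 :=
  irregular_point_is_critical_general p P hP Y hloconto y hy
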